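/- Let β > 2 be real, α > 0, and U > 0 real. Then ∫₀^∞ 2r · (1 − (1 + α r^{−β})^{−U}) dr = α^{2/β} · Γ(1 − 2/β) · Γ(U + 2/β) / Γ(U). -/

import Mathlib

/-!
Rescaling `r = α^{1/β} y` and substituting `t = y^{-β}` turn the integral into
`(2 α^{2/β} / β) ∫₀^∞ t^{-s-1} (1 - (1 + t)^{-U}) dt` with `s = 2/β ∈ (0, 1)`. Integrating by
parts against `d(-t^{-s}/s)` leaves `(U/s) ∫₀^∞ t^{-s} (1 + t)^{-(U+1)} dt`, which the substitution
`t = x⁻¹ - 1` identifies with the Beta integral `B(1 - s, U + s) = Γ(1 - s) Γ(U + s) / Γ(U + 1)`.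
-/

open MeasureTheory Real Set Filter Topology

lemma integral_Ioo_rpow_mul_one_sub_rpow {a b : ℝ} (ha : 0 < a) (hb : 0 < b) :
    ∫ x in Ioo (0 : ℝ) 1, x ^ (a - 1) * (1 - x) ^ (b - 1) =
      Gamma a * Gamma b / Gamma (a + b) := by
  have hcast : Complex.betaIntegral a b =
      ↑(∫ x in Ioo (0 : ℝ) 1, x ^ (a - 1) * (1 - x) ^ (b - 1)) := by
    rw [Complex.betaIntegral, ← integral_Ioc_eq_integral_Ioo,
      ← intervalIntegral.integral_of_le zero_le_one, ← intervalIntegral.integral_ofReal]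
    refine intervalIntegral.integral_congr fun x hx => ?_
    rw [uIcc_of_le zero_le_one] at hx
    push_cast
    rw [Complex.ofReal_cpow hx.1, Complex.ofReal_cpow (sub_nonneg.2 hx.2)]
    push_cast
    ring_nf
  simpa [hcast, ProbabilityTheory.beta] using
    (ProbabilityTheory.beta_eq_betaIntegralReal a b ha hb).symm

lemma integral_Ioi_rpow_mul_one_add_rpow_neg {a b : ℝ} (ha : 0 < a) (hb : 0 < b) :
    ∫ t in Ioi (0 : ℝ), t ^ (a - 1) * (1 + t) ^ (-(a + b)) =
      Gamma a * Gamma b / Gamma (a + b) := by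
  have himage : (fun x : ℝ => x⁻¹ - 1) '' Ioo 0 1 = Ioi 0 := by
    ext t
    refine ⟨fun ⟨x, ⟨hx0, hx1⟩, hxt⟩ => ?_, fun ht => ⟨(1 + t)⁻¹, ⟨?_, ?_⟩, ?_⟩⟩
    · rw [← hxt, mem_Ioi, sub_pos]
      exact one_lt_inv₀ hx0 |>.2 hx1
    · exact inv_pos.2 (by linarith [mem_Ioi.1 ht])
    · exact inv_lt_one_of_one_lt₀ (by linarith [mem_Ioi.1 ht])
    · simp
  have hderiv : ∀ x ∈ Ioo (0 : ℝ) 1,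
      HasDerivWithinAt (fun x : ℝ => x⁻¹ - 1) (-(x ^ 2)⁻¹) (Ioo 0 1) x := fun x hx =>
    ((hasDerivAt_inv hx.1.ne').sub_const 1).hasDerivWithinAt
  have hinj : InjOn (fun x : ℝ => x⁻¹ - 1) (Ioo 0 1) := fun x _ y _ h =>
    inv_injective (sub_left_injective h)
  rw [← himage, integral_image_eq_integral_abs_deriv_smul measurableSet_Ioo hderiv hinj,
    mul_comm (Gamma a), add_comm a, ← integral_Ioo_rpow_mul_one_sub_rpow hb ha]
  refine setIntegral_congr_fun measurableSet_Ioo fun x ⟨hx0, hx1⟩ => ?_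
  have h1x : 0 ≤ 1 - x := by linarith
  have hpow : x ^ (b + a) = x ^ (a - 1) * x ^ (b - 1) * x ^ 2 := by
    rw [← rpow_natCast, ← rpow_add hx0, ← rpow_add hx0]
    congr 1
    push_cast
    ring
  have hxa : 0 < x ^ (a - 1) := rpow_pos_of_pos hx0 _
  rw [show x⁻¹ - 1 = (1 - x) * x⁻¹ by field_simp, show 1 + (1 - x) * x⁻¹ = x⁻¹ by field_simp; ring,
    mul_rpow h1x (inv_nonneg.2 hx0.le), inv_rpow hx0.le, inv_rpow hx0.le, rpow_neg hx0.le,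
    inv_inv, hpow, abs_neg, abs_of_pos (by positivity), smul_eq_mul]
  field_simp

lemma integral_Ioi_mul_comp_rpow_neg (φ : ℝ → ℝ) {β : ℝ} (hβ : β ≠ 0) :
    ∫ y in Ioi (0 : ℝ), y * φ (y ^ (-β)) =
      |β|⁻¹ * ∫ t in Ioi (0 : ℝ), t ^ (-(2 / β) - 1) * φ t := by
  rw [← integral_comp_rpow_Ioi (fun t => t ^ (-(2 / β) - 1) * φ t) (neg_ne_zero.2 hβ),
    ← integral_const_mul]
  refine setIntegral_congr_fun measurableSet_Ioi fun y (hy : 0 < y) => ?_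
  have hpow : y ^ (-β - 1) * (y ^ (-β)) ^ (-(2 / β) - 1) = y := by
    rw [← rpow_mul hy.le, ← rpow_add hy, show -β - 1 + -β * (-(2 / β) - 1) = 1 by field_simp; ring,
      rpow_one]
  have hβ' : |β| ≠ 0 := abs_ne_zero.2 hβ
  calc y * φ (y ^ (-β))
      = y ^ (-β - 1) * (y ^ (-β)) ^ (-(2 / β) - 1) * φ (y ^ (-β)) := by rw [hpow]
    _ = _ := by rw [abs_neg, smul_eq_mul]; field_simp

lemma integral_Ioi_mul_comp_mul_rpow_neg (φ : ℝ → ℝ) {α β : ℝ} (hα : 0 < α) (hβ : β ≠ 0) :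
    ∫ r in Ioi (0 : ℝ), r * φ (α * r ^ (-β)) =
      α ^ (2 / β) * ∫ y in Ioi (0 : ℝ), y * φ (y ^ (-β)) := by
  set c := α ^ β⁻¹
  have hc : 0 < c := rpow_pos_of_pos hα _
  have hcc : α ^ (2 / β) = c * c := by
    rw [← rpow_add hα]; congr 1; ring
  have hcβ : c ^ (-β) = α⁻¹ := by
    rw [← rpow_mul hα.le, inv_mul_eq_div, neg_div, div_self hβ, rpow_neg_one]
  have hscale : ∀ r ∈ Ioi (0 : ℝ),
      r * φ (α * r ^ (-β)) = c * ((c⁻¹ * r) * φ ((c⁻¹ * r) ^ (-β))) := by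
    intro r (hr : 0 < r)
    rw [mul_rpow (inv_nonneg.2 hc.le) hr.le, inv_rpow hc.le, hcβ, inv_inv]
    field_simp
  rw [setIntegral_congr_fun measurableSet_Ioi hscale, integral_const_mul,
    integral_comp_mul_left_Ioi (fun y => y * φ (y ^ (-β))) 0 (inv_pos.2 hc), hcc]
  simp [mul_assoc]

lemma integrableOn_Ioi_rpow_mul_one_add_rpow_neg {a b : ℝ} (ha : 0 < a) (hb : 0 < b) :
    IntegrableOn (fun t : ℝ => t ^ (a - 1) * (1 + t) ^ (-(a + b))) (Ioi 0) :=
  Integrable.of_integral_ne_zero <| by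
    rw [integral_Ioi_rpow_mul_one_add_rpow_neg ha hb]
    have := Gamma_pos_of_pos ha
    have := Gamma_pos_of_pos hb
    have := Gamma_pos_of_pos (add_pos ha hb)
    positivity

section OneSubOneAddRpowNeg

variable {t U : ℝ}

lemma one_sub_one_add_rpow_neg_nonneg (ht : 0 ≤ t) (hU : 0 ≤ U) : 0 ≤ 1 - (1 + t) ^ (-U) :=
  sub_nonneg.2 <| rpow_le_one_of_one_le_of_nonpos (by linarith) (neg_nonpos.2 hU)

lemma one_sub_one_add_rpow_neg_le_one (ht : 0 ≤ t) : 1 - (1 + t) ^ (-U) ≤ 1 :=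
  sub_le_self _ (rpow_nonneg (by linarith) _)

lemma one_sub_one_add_rpow_neg_le_mul (ht : 0 ≤ t) (hU : 0 ≤ U) :
    1 - (1 + t) ^ (-U) ≤ U * t := by
  have hlog : log (1 + t) ≤ t := by linarith [log_le_sub_one_of_pos (by linarith : 0 < 1 + t)]
  have := add_one_le_exp (log (1 + t) * -U)
  rw [← rpow_def_of_pos (by linarith)] at this
  nlinarith

lemma one_sub_one_add_rpow_neg_le_mul_div (ht : 0 ≤ t) (hU : 0 ≤ U) :
    1 - (1 + t) ^ (-U) ≤ (1 + U) * (t / (1 + t)) := by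
  have h1 := one_sub_one_add_rpow_neg_le_one (U := U) ht
  have h2 := one_sub_one_add_rpow_neg_le_mul ht hU
  rw [mul_div_assoc', le_div_iff₀ (by linarith)]
  rcases le_total (U * t) 1 with h | h <;> nlinarith

end OneSubOneAddRpowNeg

lemma integrableOn_Ioi_one_sub_one_add_rpow_neg_mul_rpow {s U : ℝ} (hs0 : 0 < s) (hs1 : s < 1)
    (hU : 0 ≤ U) :
    IntegrableOn (fun t : ℝ => (1 - (1 + t) ^ (-U)) * t ^ (-s - 1)) (Ioi 0) := by
  have hdom := (integrableOn_Ioi_rpow_mul_one_add_rpow_neg (sub_pos.2 hs1) hs0).const_mul (1 + U)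
  refine hdom.mono' (by fun_prop) <| (ae_restrict_iff' measurableSet_Ioi).2 <| ae_of_all _ ?_
  intro t (ht : 0 < t)
  have hu := one_sub_one_add_rpow_neg_nonneg ht.le hU
  have hts : t ^ (-s - 1) = t ^ (1 - s - 1) / t := by
    rw [rpow_sub_one ht.ne', show 1 - s - 1 = -s by ring]
  rw [norm_of_nonneg (by positivity), hts, show -(1 - s + s) = -1 by ring, rpow_neg_one]
  calc (1 - (1 + t) ^ (-U)) * (t ^ (1 - s - 1) / t)
      ≤ (1 + U) * (t / (1 + t)) * (t ^ (1 - s - 1) / t) := by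
        gcongr
        exact one_sub_one_add_rpow_neg_le_mul_div ht.le hU
    _ = (1 + U) * (t ^ (1 - s - 1) * (1 + t)⁻¹) := by field_simp

lemma tendsto_one_sub_one_add_rpow_neg_mul_rpow_nhdsGT_zero {s U : ℝ} (hs1 : s < 1)
    (hU : 0 ≤ U) :
    Tendsto (fun t : ℝ => (1 - (1 + t) ^ (-U)) * t ^ (-s)) (𝓝[>] 0) (𝓝 0) := by
  have hlim : Tendsto (fun t : ℝ => U * t ^ (1 - s)) (𝓝[>] 0) (𝓝 0) := by
    have : Tendsto (fun t : ℝ => U * t ^ (1 - s)) (𝓝[>] 0) (𝓝 (U * 0 ^ (1 - s))) :=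
      ((continuousAt_rpow_const 0 (1 - s) (Or.inr (by linarith))).tendsto.mono_left
        nhdsWithin_le_nhds).const_mul U
    rwa [zero_rpow (by linarith), mul_zero] at this
  refine squeeze_zero_norm' ?_ hlim
  filter_upwards [self_mem_nhdsWithin] with t (ht : 0 < t)
  rw [norm_of_nonneg (mul_nonneg (one_sub_one_add_rpow_neg_nonneg ht.le hU) (by positivity)),
    show 1 - s = -s + 1 by ring, rpow_add_one ht.ne']
  calc (1 - (1 + t) ^ (-U)) * t ^ (-s) ≤ U * t * t ^ (-s) := by
        gcongr
        exact one_sub_one_add_rpow_neg_le_mul ht.le hU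
    _ = U * (t ^ (-s) * t) := by ring

lemma tendsto_one_sub_one_add_rpow_neg_mul_rpow_atTop {s U : ℝ} (hs0 : 0 < s) (hU : 0 ≤ U) :
    Tendsto (fun t : ℝ => (1 - (1 + t) ^ (-U)) * t ^ (-s)) atTop (𝓝 0) := by
  refine squeeze_zero_norm' ?_ (tendsto_rpow_neg_atTop hs0)
  filter_upwards [eventually_gt_atTop 0] with t ht
  rw [norm_of_nonneg (mul_nonneg (one_sub_one_add_rpow_neg_nonneg ht.le hU) (by positivity))]
  exact mul_le_of_le_one_left (by positivity) (one_sub_one_add_rpow_neg_le_one ht.le)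

lemma integral_Ioi_rpow_mul_one_sub_one_add_rpow_neg {s U : ℝ} (hs0 : 0 < s) (hs1 : s < 1)
    (hU : 0 < U) :
    ∫ t in Ioi (0 : ℝ), t ^ (-s - 1) * (1 - (1 + t) ^ (-U)) =
      Gamma (1 - s) * Gamma (U + s) / (s * Gamma U) := by
  set u : ℝ → ℝ := fun t => 1 - (1 + t) ^ (-U)
  set v : ℝ → ℝ := fun t => -t ^ (-s) / s
  have hu : ∀ t ∈ Ioi (0 : ℝ), HasDerivAt u (U * (1 + t) ^ (-U - 1)) t := by
    intro t (ht : 0 < t)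
    refine ((((hasDerivAt_id t).const_add 1).rpow_const (p := -U)
      (Or.inl (by positivity))).const_sub 1).congr_deriv ?_
    simp only [id]
    ring
  have hv : ∀ t ∈ Ioi (0 : ℝ), HasDerivAt v (t ^ (-s - 1)) t := by
    intro t (ht : 0 < t)
    refine (((hasDerivAt_rpow_const (p := -s) (Or.inl ht.ne')).neg).div_const s).congr_deriv ?_
    field_simp
  have hu'v : ∀ t, U * (1 + t) ^ (-U - 1) * v t =
      -(U / s) * (t ^ (1 - s - 1) * (1 + t) ^ (-(1 - s + (U + s)))) := by
    intro t
    simp only [v, show 1 - s - 1 = -s by ring, show -(1 - s + (U + s)) = -U - 1 by ring]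
    ring
  have huv : u * v = fun t => -((1 - (1 + t) ^ (-U)) * t ^ (-s)) / s := by
    ext t
    simp only [Pi.mul_apply, u, v]
    ring
  have hibp := integral_Ioi_mul_deriv_eq_deriv_mul hu hv
    (integrableOn_Ioi_one_sub_one_add_rpow_neg_mul_rpow hs0 hs1 hU.le)
    (IntegrableOn.congr_fun ((integrableOn_Ioi_rpow_mul_one_add_rpow_neg (sub_pos.2 hs1)
      (add_pos hU hs0)).const_mul (-(U / s))) (fun t _ => (hu'v t).symm) measurableSet_Ioi)
    (by simpa [huv] using
      (tendsto_one_sub_one_add_rpow_neg_mul_rpow_nhdsGT_zero hs1 hU.le).neg.div_const s)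
    (by simpa [huv] using
      (tendsto_one_sub_one_add_rpow_neg_mul_rpow_atTop hs0 hU.le).neg.div_const s)
  simp only [hu'v, integral_const_mul,
    integral_Ioi_rpow_mul_one_add_rpow_neg (sub_pos.2 hs1) (add_pos hU hs0)] at hibp
  rw [setIntegral_congr_fun measurableSet_Ioi fun t _ => mul_comm _ _, hibp,
    show 1 - s + (U + s) = U + 1 by ring, Gamma_add_one hU.ne']
  field_simp
  ring

theorem poisson_field_exponent
    (β α U : ℝ) (hβ : 2 < β) (hα : 0 < α) (hU : 0 < U) :
    ∫ r in Set.Ioi (0 : ℝ), 2 * r * (1 - (1 + α * r ^ (-β)) ^ (-U)) =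
      α ^ (2 / β) * Real.Gamma (1 - 2 / β) * Real.Gamma (U + 2 / β) /
        Real.Gamma U := by
  have hβ0 : 0 < β := by linarith
  have hs0 : 0 < 2 / β := by positivity
  have hs1 : 2 / β < 1 := (div_lt_one hβ0).2 hβ
  have hscale := integral_Ioi_mul_comp_mul_rpow_neg (fun t => 1 - (1 + t) ^ (-U)) hα hβ0.ne'
  have hsubst := integral_Ioi_mul_comp_rpow_neg (fun t => 1 - (1 + t) ^ (-U)) hβ0.ne'
  simp only [mul_assoc (2 : ℝ), integral_const_mul]
  beta_reduce at hscale hsubst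
  rw [hscale, hsubst, integral_Ioi_rpow_mul_one_sub_one_add_rpow_neg hs0 hs1 hU, abs_of_pos hβ0]
  field_simp
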